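/- arXiv:2009.00055 — 6 statements merged into one kernel-verified Lean document; each statement's English description precedes it below -/
import Mathlib

section
/- In the setting of a Kähler manifold N with holomorphic f = f₁ + if₂ and Lagrangian submanifold V: if the imaginary part f₂ is constant on V, then grad f₁ is tangent to V at every point of V. -/
/-- In the setting of a Kähler manifold `N` (here: a complex inner
product space with complex structure `J = i·` and metric `Re⟪·,·⟫`) with holomorphic
`f = f₁ + i f₂` and Lagrangian submanifold `V`: if the imaginary part `f₂` is
constant on `V`, then `grad f₁` is tangent to `V` at every point of `V`. -/
theorem statement7 {E : Type*} [NormedAddCommGroup E] [InnerProductSpace ℂ E]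
    [FiniteDimensional ℂ E]
    (f : E → ℂ) (hf : Differentiable ℂ f)
    (f₁ f₂ : E → ℝ) (hf₁ : ∀ y, f₁ y = (f y).re) (hf₂ : ∀ y, f₂ y = (f y).im)
    -- V : a Lagrangian submanifold (here a Lagrangian real subspace)
    (V : Submodule ℝ E)
    (hLag : ∀ u ∈ V, ∀ v ∈ V, ((inner ℂ (Complex.I • u) v : ℂ)).re = 0)
    (hdim : Module.finrank ℝ V = Module.finrank ℂ E)
    -- F₁ : the gradient of f₁ with respect to the Kähler metric
    (F₁ : E → E)
    (hF₁ : ∀ x v, fderiv ℝ f₁ x v = ((inner ℂ (F₁ x) v : ℂ)).re)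
    -- f₂ is constant on V
    (hconst : ∃ c : ℝ, ∀ y ∈ V, f₂ y = c) :
    ∀ y ∈ V, F₁ y ∈ V := by
  classical
  obtain ⟨c, hc⟩ := hconst
  -- The real-differentiability of f, and the ℂ-linearity of its real derivative.
  have hfR : Differentiable ℝ f := hf.restrictScalars ℝ
  have hDeq : ∀ x : E, fderiv ℝ f x = (fderiv ℂ f x).restrictScalars ℝ :=
    fun x => (hf x).fderiv_restrictScalars ℝ
  -- fderiv of f₁ and f₂ in terms of fderiv of f
  have hf₁' : f₁ = fun x => Complex.reCLM (f x) := by funext x; exact hf₁ x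
  have hf₂' : f₂ = fun x => Complex.imCLM (f x) := by funext x; exact hf₂ x
  have hdf₁ : ∀ x v, fderiv ℝ f₁ x v = (fderiv ℝ f x v).re := by
    intro x v
    rw [hf₁']
    have h := (Complex.reCLM.hasFDerivAt.comp x (hfR x).hasFDerivAt).fderiv
    exact congrFun (congrArg _ h) v
  have hdf₂ : ∀ x v, fderiv ℝ f₂ x v = (fderiv ℝ f x v).im := by
    intro x v
    rw [hf₂']
    have h := (Complex.imCLM.hasFDerivAt.comp x (hfR x).hasFDerivAt).fderiv
    exact congrFun (congrArg _ h) v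
  -- derivative of f₂ vanishes along V at points of V
  have hdf₂V : ∀ y ∈ V, ∀ v ∈ V, fderiv ℝ f₂ y v = 0 := by
    intro y hy v hv
    have hdiff : DifferentiableAt ℝ f₂ y := by
      rw [hf₂']; exact Complex.imCLM.differentiableAt.comp y (hfR y)
    have hline : HasDerivAt (fun t : ℝ => f₂ (y + t • v)) (fderiv ℝ f₂ y v) 0 := by
      have h1 : HasDerivAt (fun t : ℝ => y + t • v) v 0 := by
        simpa using ((hasDerivAt_id (0:ℝ)).smul_const v).const_add y
      have h2 : HasFDerivAt f₂ (fderiv ℝ f₂ y) (y + (0:ℝ) • v) := by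
        simpa using hdiff.hasFDerivAt
      exact h2.comp_hasDerivAt 0 h1
    have hconst' : (fun t : ℝ => f₂ (y + t • v)) = fun _ => c := by
      funext t
      exact hc _ (V.add_mem hy (V.smul_mem t hv))
    rw [hconst'] at hline
    have := (hasDerivAt_const (0:ℝ) c).unique hline
    exact this.symm
  -- key: Re ⟪F₁ y, I • v⟫ = 0 for y, v ∈ V
  have key : ∀ y ∈ V, ∀ v ∈ V, ((inner ℂ (F₁ y) (Complex.I • v) : ℂ)).re = 0 := by
    intro y hy v hv
    have h1 : ((inner ℂ (F₁ y) (Complex.I • v) : ℂ)).re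
        = fderiv ℝ f₁ y (Complex.I • v) := (hF₁ y (Complex.I • v)).symm
    rw [h1, hdf₁, hDeq]
    have h2 : (fderiv ℂ f y).restrictScalars ℝ (Complex.I • v)
        = Complex.I * fderiv ℂ f y v := by
      simp [ContinuousLinearMap.map_smul, smul_eq_mul]
    rw [h2]
    have h3 : (Complex.I * fderiv ℂ f y v).re = -(fderiv ℝ f y v).im := by
      rw [hDeq]; simp [Complex.mul_re]
    rw [h3, ← hdf₂ y v, hdf₂V y hy v hv, neg_zero]
  -- Set up the real inner product space structure
  letI : InnerProductSpace ℝ E := InnerProductSpace.rclikeToReal ℂ E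
  have hreal : ∀ x z : E, (inner ℝ x z : ℝ) = ((inner ℂ x z : ℂ)).re := fun _ _ => rfl
  -- J = multiplication by I as a real-linear equivalence
  let J : E ≃ₗ[ℝ] E :=
    { toFun := fun x => Complex.I • x
      invFun := fun x => (-Complex.I) • x
      map_add' := fun x y => smul_add _ _ _
      map_smul' := fun r x => (smul_comm r Complex.I x).symm
      left_inv := fun x => by simp [smul_smul]
      right_inv := fun x => by simp [smul_smul] }
  set W := (V.map (J : E →ₗ[ℝ] E))ᗮ with hW
  -- V ≤ W
  have hVW : V ≤ W := by
    intro v hv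
    rw [Submodule.mem_orthogonal]
    rintro u hu
    obtain ⟨w, hw, rfl⟩ := hu
    rw [hreal]
    exact hLag w hw v hv
  -- dimension count
  have hfinE : Module.finrank ℝ E = 2 * Module.finrank ℂ E := by
    rw [← Module.finrank_mul_finrank ℝ ℂ E, Complex.finrank_real_complex]
  have hmapdim : Module.finrank ℝ (V.map (J : E →ₗ[ℝ] E)) = Module.finrank ℝ V :=
    (LinearEquiv.finrank_map_eq J V)
  have horth : Module.finrank ℝ (V.map (J : E →ₗ[ℝ] E))
      + Module.finrank ℝ W = Module.finrank ℝ E :=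
    Submodule.finrank_add_finrank_orthogonal _
  have hWdim : Module.finrank ℝ W = Module.finrank ℝ V := by
    omega
  have hVeqW : V = W :=
    Submodule.eq_of_le_of_finrank_le hVW (le_of_eq hWdim)
  -- conclude
  intro y hy
  rw [hVeqW]
  rw [Submodule.mem_orthogonal]
  rintro u hu
  obtain ⟨w, hw, rfl⟩ := hu
  rw [hreal]
  have := key y hy w hw
  have hconj : ((inner ℂ ((J : E →ₗ[ℝ] E) w) (F₁ y) : ℂ)).re
      = ((inner ℂ (F₁ y) (Complex.I • w) : ℂ)).re := by
    have : (inner ℂ ((J : E →ₗ[ℝ] E) w) (F₁ y) : ℂ)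
        = starRingEnd ℂ (inner ℂ (F₁ y) (Complex.I • w) : ℂ) := by
      exact (inner_conj_symm _ _).symm
    rw [this, Complex.conj_re]
  rw [hconj, this]
end

section
/- Let g be a complex semisimple Lie algebra with Cartan subalgebra h, root system Π, Weyl basis {X_α}, and compact real form u. Fix regular H₀, H in the positive Weyl chamber of h_ℝ and let Z(x) = [x, [τx, H]]. At a singularity x = wH₀ (w in the Weyl group), the differential of Z is dZ_x(v) = −ad(x) ad(H)(τ v), and for each positive root α the real 4-dimensional subspace (g_α ⊕ g_{−α}) (viewed over ℝ) is dZ_x-invariant with eigenvalues ±α(x)α(H); the (−α(x)α(H))-eigenspace is (g_α + g_{−α}) ∩ u = span_ℝ{X_α − X_{−α}, i(X_α + X_{−α})} and the (+α(x)α(H))-eigenspace is (g_α + g_{−α}) ∩ iu = span_ℝ{X_α + X_{−α}, i(X_α − X_{−α})}. -/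
/-- Let `g` be a complex semisimple Lie algebra with Cartan
subalgebra `h`, Weyl basis `{X_α}`, and compact real form `u` with conjugation `τ`.
Fix regular `H₀, H` in the positive Weyl chamber and `Z(x) = [x,[τx,H]]`.  At a
singularity `x = wH₀`, the differential of `Z` is `dZ_x(v) = −ad(x) ad(H)(τv)`, and
for each positive root `α` the real 4-dimensional subspace `g_α ⊕ g_{−α}` (over `ℝ`)
is `dZ_x`-invariant with eigenvalues `±α(x)α(H)`: the `(−α(x)α(H))`-eigenspace is
`span_ℝ{X_α − X_{−α}, i(X_α + X_{−α})} = (g_α+g_{−α}) ∩ u` and the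
`(+α(x)α(H))`-eigenspace is `span_ℝ{X_α + X_{−α}, i(X_α − X_{−α})} = (g_α+g_{−α}) ∩ iu`. -/
theorem statement10 {L : Type*} [LieRing L] [LieAlgebra ℂ L] [Module.Finite ℂ L]
    [LieAlgebra.IsSemisimple ℂ L]
    -- τ : the conjugation with respect to the compact real form u
    (τ : L → L)
    (hadd : ∀ X Y : L, τ (X + Y) = τ X + τ Y)
    (hsmul : ∀ (c : ℂ) (X : L), τ (c • X) = (starRingEnd ℂ) c • τ X)
    (hinv : ∀ X : L, τ (τ X) = X)
    (hlie : ∀ X Y : L, τ ⁅X, Y⁆ = ⁅τ X, τ Y⁆)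
    -- x = wH₀ and H : commuting regular elements of the Cartan subalgebra
    (x H : L) (hτxH : ⁅τ x, H⁆ = 0) (hxH : ⁅x, H⁆ = 0)
    -- a positive root α, with real values αx = α(x), αH = α(H), and Weyl basis
    -- vectors X_α ∈ g_α, X_{−α} ∈ g_{−α}
    (Xα Xmα : L) (hind : LinearIndependent ℂ ![Xα, Xmα])
    (αx αH : ℝ) (hαx : αx ≠ 0) (hαH : αH ≠ 0)
    (hxα : ⁅x, Xα⁆ = (αx : ℂ) • Xα) (hxmα : ⁅x, Xmα⁆ = -((αx : ℂ) • Xmα))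
    (hHα : ⁅H, Xα⁆ = (αH : ℂ) • Xα) (hHmα : ⁅H, Xmα⁆ = -((αH : ℂ) • Xmα))
    (hτXα : τ Xα = -Xmα) (hτXmα : τ Xmα = -Xα)
    -- dZ : the differential of Z(x) = [x,[τx,H]] at the singularity x
    (dZ : L → L)
    (hdZ : ∀ v, dZ v = ⁅v, ⁅τ x, H⁆⁆ + ⁅x, ⁅τ v, H⁆⁆) :
    -- dZ_x(v) = −ad(x) ad(H) (τ v)
    (∀ v : L, dZ v = -⁅x, ⁅H, τ v⁆⁆) ∧
    -- invariance of the real 4-dimensional subspace g_α ⊕ g_{−α}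
    (∀ v ∈ Submodule.span ℝ ({Xα, Xmα, Complex.I • Xα, Complex.I • Xmα} : Set L),
      dZ v ∈ Submodule.span ℝ ({Xα, Xmα, Complex.I • Xα, Complex.I • Xmα} : Set L)) ∧
    -- eigenvectors for the eigenvalue −α(x)α(H)
    (dZ (Xα - Xmα) = -(((αx * αH : ℝ) : ℂ)) • (Xα - Xmα)) ∧
    (dZ (Complex.I • (Xα + Xmα)) = -(((αx * αH : ℝ) : ℂ)) • (Complex.I • (Xα + Xmα))) ∧
    -- eigenvectors for the eigenvalue +α(x)α(H)
    (dZ (Xα + Xmα) = ((αx * αH : ℝ) : ℂ) • (Xα + Xmα)) ∧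
    (dZ (Complex.I • (Xα - Xmα)) = ((αx * αH : ℝ) : ℂ) • (Complex.I • (Xα - Xmα))) ∧
    -- the eigenspaces inside g_α ⊕ g_{−α}
    ({v : L | v ∈ Submodule.span ℝ ({Xα, Xmα, Complex.I • Xα, Complex.I • Xmα} : Set L) ∧
        dZ v = -(((αx * αH : ℝ) : ℂ)) • v}
      = ↑(Submodule.span ℝ ({Xα - Xmα, Complex.I • (Xα + Xmα)} : Set L))) ∧
    ({v : L | v ∈ Submodule.span ℝ ({Xα, Xmα, Complex.I • Xα, Complex.I • Xmα} : Set L) ∧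
        dZ v = ((αx * αH : ℝ) : ℂ) • v}
      = ↑(Submodule.span ℝ ({Xα + Xmα, Complex.I • (Xα - Xmα)} : Set L))) := by
  have hc : (((αx * αH : ℝ) : ℂ)) ≠ 0 := by
    simpa using mul_ne_zero hαx hαH
  set c : ℂ := ((αx * αH : ℝ) : ℂ) with hc_def
  -- dZ v = -[x,[H,τv]]
  have h1 : ∀ v : L, dZ v = -⁅x, ⁅H, τ v⁆⁆ := by
    intro v
    rw [hdZ, hτxH, lie_zero, zero_add, ← lie_skew H (τ v), lie_neg, neg_neg]
  -- linearity properties of dZ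
  have hadd' : ∀ v w : L, dZ (v + w) = dZ v + dZ w := by
    intro v w; rw [h1, h1, h1, hadd, lie_add, lie_add, neg_add]
  have hsmul' : ∀ (a : ℂ) (v : L), dZ (a • v) = (starRingEnd ℂ) a • dZ v := by
    intro a v; rw [h1, h1, hsmul, lie_smul, lie_smul, smul_neg]
  have hneg' : ∀ v : L, dZ (-v) = -dZ v := by
    intro v
    have := hsmul' (-1) v
    simpa using this
  have hsub' : ∀ v w : L, dZ (v - w) = dZ v - dZ w := by
    intro v w; rw [sub_eq_add_neg, hadd', hneg', sub_eq_add_neg]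
  have hrsmul : ∀ (r : ℝ) (v : L), dZ (r • v) = r • dZ v := by
    intro r v
    have := hsmul' (r : ℂ) v
    simpa [Complex.coe_smul, Complex.conj_ofReal] using this
  have h0 : dZ 0 = 0 := by simpa using hrsmul 0 0
  -- action on basis vectors
  have hXa : dZ Xα = c • Xmα := by
    rw [h1, hτXα, lie_neg, hHmα, neg_neg, lie_smul, hxmα]
    simp only [hc_def]
    push_cast
    module
  have hXma : dZ Xmα = c • Xα := by
    rw [h1, hτXmα, lie_neg, hHα, lie_neg, lie_smul, hxα]
    simp only [hc_def]
    push_cast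
    module
  have hIXa : dZ (Complex.I • Xα) = -c • (Complex.I • Xmα) := by
    rw [hsmul', hXa, Complex.conj_I]
    module
  have hIXma : dZ (Complex.I • Xmα) = -c • (Complex.I • Xα) := by
    rw [hsmul', hXma, Complex.conj_I]
    module
  -- eigenvector computations
  have e1 : dZ (Xα - Xmα) = -c • (Xα - Xmα) := by
    rw [hsub', hXa, hXma]; module
  have e2 : dZ (Complex.I • (Xα + Xmα)) = -c • (Complex.I • (Xα + Xmα)) := by
    rw [hsmul', hadd', hXa, hXma, Complex.conj_I]; module
  have e3 : dZ (Xα + Xmα) = c • (Xα + Xmα) := by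
    rw [hadd', hXa, hXma]; module
  have e4 : dZ (Complex.I • (Xα - Xmα)) = c • (Complex.I • (Xα - Xmα)) := by
    rw [hsmul', hsub', hXa, hXma, Complex.conj_I]; module
  -- complex pair independence
  have hindC : ∀ s t : ℂ, s • Xα + t • Xmα = 0 → s = 0 ∧ t = 0 :=
    LinearIndependent.pair_iff.mp hind
  -- the real 4-dim subspace
  set S := Submodule.span ℝ ({Xα, Xmα, Complex.I • Xα, Complex.I • Xmα} : Set L) with hS_def
  have hmXa : Xα ∈ S := Submodule.subset_span (by simp)
  have hmXma : Xmα ∈ S := Submodule.subset_span (by simp)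
  have hmIXa : Complex.I • Xα ∈ S := Submodule.subset_span (by simp)
  have hmIXma : Complex.I • Xmα ∈ S := Submodule.subset_span (by simp)
  have hcsm : ∀ v : L, v ∈ S → c • v ∈ S := by
    intro v hv
    have : c • v = (αx * αH) • v := by rw [hc_def, Complex.coe_smul]
    rw [this]
    exact S.smul_mem _ hv
  have hinvar : ∀ v ∈ S, dZ v ∈ S := by
    intro v hv
    induction hv using Submodule.span_induction with
    | mem y hy =>
      rcases hy with rfl | rfl | rfl | rfl
      · rw [hXa]; exact hcsm _ hmXma
      · rw [hXma]; exact hcsm _ hmXa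
      · rw [hIXa]; rw [show (-c : ℂ) • (Complex.I • Xmα) = c • (-(Complex.I • Xmα)) by module]
        exact hcsm _ (S.neg_mem hmIXma)
      · rw [hIXma]; rw [show (-c : ℂ) • (Complex.I • Xα) = c • (-(Complex.I • Xα)) by module]
        exact hcsm _ (S.neg_mem hmIXa)
    | zero => rw [h0]; exact S.zero_mem
    | add u w _ _ hu hw => rw [hadd']; exact S.add_mem hu hw
    | smul r u _ hu => rw [hrsmul]; exact S.smul_mem r hu
  -- decomposition of elements of S
  have hdecomp : ∀ v ∈ S, ∃ a b p q : ℝ,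
      v = a • Xα + b • Xmα + p • (Complex.I • Xα) + q • (Complex.I • Xmα) := by
    intro v hv
    rw [hS_def, show ({Xα, Xmα, Complex.I • Xα, Complex.I • Xmα} : Set L)
      = insert Xα (insert Xmα (insert (Complex.I • Xα) {Complex.I • Xmα})) from rfl] at hv
    obtain ⟨a, z, hz, rfl⟩ := Submodule.mem_span_insert.mp hv
    obtain ⟨b, z2, hz2, rfl⟩ := Submodule.mem_span_insert.mp hz
    obtain ⟨p, z3, hz3, rfl⟩ := Submodule.mem_span_insert.mp hz2
    obtain ⟨q, hq⟩ := Submodule.mem_span_singleton.mp hz3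
    exact ⟨a, b, p, q, by rw [← hq]; abel⟩
  -- value of dZ on a general element of S
  have hval : ∀ a b p q : ℝ,
      dZ (a • Xα + b • Xmα + p • (Complex.I • Xα) + q • (Complex.I • Xmα))
        = (c * (b - q * Complex.I)) • Xα + (c * (a - p * Complex.I)) • Xmα := by
    intro a b p q
    rw [hadd', hadd', hadd', hrsmul, hrsmul, hrsmul, hrsmul, hXa, hXma, hIXa, hIXma,
      ← Complex.coe_smul a, ← Complex.coe_smul b, ← Complex.coe_smul p, ← Complex.coe_smul q]
    module
  refine ⟨h1, hinvar, e1, e2, e3, e4, ?_, ?_⟩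
  · ext v
    simp only [Set.mem_setOf_eq, SetLike.mem_coe]
    constructor
    · rintro ⟨hvS, hveq⟩
      obtain ⟨a, b, p, q, rfl⟩ := hdecomp v hvS
      have h' := sub_eq_zero.mpr hveq
      rw [hval, ← Complex.coe_smul a, ← Complex.coe_smul b, ← Complex.coe_smul p,
        ← Complex.coe_smul q] at h'
      have hzero : (c * ((b + a) + (p - q) * Complex.I)) • Xα
          + (c * ((a + b) + (q - p) * Complex.I)) • Xmα = 0 := by
        linear_combination (norm := module) h'
      obtain ⟨h1', h2'⟩ := hindC _ _ hzero
      have hba : b = -a ∧ p = q := by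
        have := mul_eq_zero.mp h1'
        rcases this with h | h
        · exact absurd h hc
        · constructor
          · have := congrArg Complex.re h
            simp at this; linarith
          · have := congrArg Complex.im h
            simp at this; linarith
      obtain ⟨hb, hp⟩ := hba
      rw [Submodule.mem_span_pair]
      exact ⟨a, q, by rw [hb, hp]; rw [smul_add]; match_scalars <;> simp only [Complex.coe_algebraMap] <;> push_cast <;> ring⟩
    · intro hv
      obtain ⟨a, b, hab⟩ := Submodule.mem_span_pair.mp hv
      constructor
      · rw [← hab]
        exact S.add_mem (S.smul_mem a (S.sub_mem hmXa hmXma))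
          (S.smul_mem b (by rw [smul_add]; exact S.add_mem hmIXa hmIXma))
      · rw [← hab, hadd', hrsmul, hrsmul, e1, e2,
          ← Complex.coe_smul a, ← Complex.coe_smul b]
        match_scalars <;> simp only [Complex.coe_algebraMap] <;> push_cast <;> ring
  · ext v
    simp only [Set.mem_setOf_eq, SetLike.mem_coe]
    constructor
    · rintro ⟨hvS, hveq⟩
      obtain ⟨a, b, p, q, rfl⟩ := hdecomp v hvS
      have h' := sub_eq_zero.mpr hveq
      rw [hval, ← Complex.coe_smul a, ← Complex.coe_smul b, ← Complex.coe_smul p,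
        ← Complex.coe_smul q] at h'
      have hzero : (c * ((b - a) + (-p - q) * Complex.I)) • Xα
          + (c * ((a - b) + (-q - p) * Complex.I)) • Xmα = 0 := by
        linear_combination (norm := module) h'
      obtain ⟨h1', h2'⟩ := hindC _ _ hzero
      have hba : b = a ∧ q = -p := by
        have := mul_eq_zero.mp h1'
        rcases this with h | h
        · exact absurd h hc
        · constructor
          · have := congrArg Complex.re h
            simp at this; linarith
          · have := congrArg Complex.im h
            simp at this; linarith
      obtain ⟨hb, hq⟩ := hba
      rw [Submodule.mem_span_pair]
      exact ⟨a, p, by rw [hb, hq]; rw [smul_sub]; match_scalars <;> simp only [Complex.coe_algebraMap] <;> push_cast <;> ring⟩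
    · intro hv
      obtain ⟨a, b, hab⟩ := Submodule.mem_span_pair.mp hv
      constructor
      · rw [← hab]
        exact S.add_mem (S.smul_mem a (S.add_mem hmXa hmXma))
          (S.smul_mem b (by rw [smul_sub]; exact S.sub_mem hmIXa hmIXma))
      · rw [← hab, hadd', hrsmul, hrsmul, e3, e4,
          ← Complex.coe_smul a, ← Complex.coe_smul b]
        match_scalars <;> simp only [Complex.coe_algebraMap] <;> push_cast <;> ring
end

section
/- In the setting above, the stable subspace V_x⁻ = Σ_{α>0} (g_α+g_{−α}) ∩ u and unstable subspace V_x⁺ = Σ_{α>0} (g_α+g_{−α}) ∩ iu of dZ at a singularity x = wH₀ are Lagrangian subspaces of T_x O(H₀) with respect to the symplectic form Ω = Im H_τ. -/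
private lemma aux_im_span_zero {L : Type*} [AddCommGroup L] [Module ℝ L]
    (B : L → L → ℝ)
    (haddl : ∀ X X' Y, B (X + X') Y = B X Y + B X' Y)
    (haddr : ∀ X Y Y', B X (Y + Y') = B X Y + B X Y')
    (hsmull : ∀ (r : ℝ) X Y, B (r • X) Y = r * B X Y)
    (hsmulr : ∀ (r : ℝ) X Y, B X (r • Y) = r * B X Y)
    (S : Set L) (hS : ∀ a ∈ S, ∀ b ∈ S, B a b = 0) :
    ∀ X ∈ Submodule.span ℝ S, ∀ Y ∈ Submodule.span ℝ S, B X Y = 0 := by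
  have h0l : ∀ Y, B 0 Y = 0 := fun Y => by
    have := hsmull 0 0 Y; simpa using this
  have h0r : ∀ X, B X 0 = 0 := fun X => by
    have := hsmulr 0 X 0; simpa using this
  intro X hX Y hY
  induction hX, hY using Submodule.span_induction₂ with
  | mem_mem a b ha hb => exact hS a ha b hb
  | zero_left y hy => exact h0l y
  | zero_right x hx => exact h0r x
  | add_left x y z hx hy hz h1 h2 => rw [haddl, h1, h2, add_zero]
  | add_right x y z hx hy hz h1 h2 => rw [haddr, h1, h2, add_zero]
  | smul_left r x y hx hy h => rw [hsmull, h, mul_zero]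
  | smul_right r x y hx hy h => rw [hsmulr, h, mul_zero]

private lemma aux_indep {L : Type*} [AddCommGroup L] [Module ℂ L]
    {ι : Type*} [Fintype ι] (Xp Xm : ι → L)
    (hind : LinearIndependent ℂ (Sum.elim Xp Xm)) (ε : ℂ) :
    LinearIndependent ℝ (Sum.elim (fun i => Xp i - ε • Xm i)
      (fun i => Complex.I • (Xp i + ε • Xm i))) := by
  rw [Fintype.linearIndependent_iff] at hind ⊢
  intro c hc
  set d : ι ⊕ ι → ℂ := Sum.elim
    (fun i => (c (Sum.inl i) : ℂ) + (c (Sum.inr i) : ℂ) * Complex.I)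
    (fun i => ε * (-(c (Sum.inl i) : ℂ) + (c (Sum.inr i) : ℂ) * Complex.I)) with hd
  have key : ∀ i, d (Sum.inl i) • Xp i + d (Sum.inr i) • Xm i
      = c (Sum.inl i) • (Xp i - ε • Xm i)
        + c (Sum.inr i) • (Complex.I • (Xp i + ε • Xm i)) := by
    intro i
    simp only [hd, Sum.elim_inl, Sum.elim_inr]
    rw [← IsScalarTower.algebraMap_smul ℂ (c (Sum.inl i)) (Xp i - ε • Xm i),
      ← IsScalarTower.algebraMap_smul ℂ (c (Sum.inr i))
        (Complex.I • (Xp i + ε • Xm i))]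
    simp only [Complex.coe_algebraMap]
    module
  have hsum : ∑ k, d k • Sum.elim Xp Xm k = 0 := by
    rw [Fintype.sum_sum_type] at hc ⊢
    simp only [Sum.elim_inl, Sum.elim_inr]
    rw [← Finset.sum_add_distrib]
    rw [← Finset.sum_add_distrib] at hc
    simpa only [key, Sum.elim_inl, Sum.elim_inr] using hc
  have hz := hind d hsum
  intro k
  rcases k with i | i
  · have h1 := hz (Sum.inl i)
    simp only [hd, Sum.elim_inl, Complex.ext_iff, Complex.add_im, Complex.add_re,
      Complex.ofReal_re, Complex.ofReal_im, Complex.mul_re, Complex.mul_im,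
      Complex.I_re, Complex.I_im, Complex.zero_re, Complex.zero_im] at h1
    simpa using h1.1
  · have h1 := hz (Sum.inl i)
    simp only [hd, Sum.elim_inl, Complex.ext_iff, Complex.add_im, Complex.add_re,
      Complex.ofReal_re, Complex.ofReal_im, Complex.mul_re, Complex.mul_im,
      Complex.I_re, Complex.I_im, Complex.zero_re, Complex.zero_im] at h1
    simpa using h1.2

/-- At a singularity `x = wH₀` of `Z`, with tangent space
`T_x O(H₀) = Σ_{α∈Π} g_α` (real dimension `2|Π|`), the stable subspace
`V_x⁻ = Σ_{α>0} (g_α+g_{−α}) ∩ u = span_ℝ{X_α−X_{−α}, i(X_α+X_{−α})}` and the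
unstable subspace `V_x⁺ = Σ_{α>0} (g_α+g_{−α}) ∩ iu = span_ℝ{X_α+X_{−α}, i(X_α−X_{−α})}`
are Lagrangian subspaces with respect to `Ω = Im H_τ`, where `H_τ(X,Y) = −⟨X,τY⟩`:
`Ω` vanishes identically on each, their real dimension is `|Π|`, `H_τ` takes real
values on both `u` and `iu` parts, and `(g_α+g_{−α})`, `(g_β+g_{−β})` are
`H_τ`-orthogonal for distinct positive roots `α ≠ β`. -/
theorem statement11 {L : Type*} [LieRing L] [LieAlgebra ℂ L] [Module.Finite ℂ L]
    [LieAlgebra.IsSemisimple ℂ L]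
    -- τ : the conjugation with respect to the compact real form u
    (τ : L → L)
    (hadd : ∀ X Y : L, τ (X + Y) = τ X + τ Y)
    (hsmul : ∀ (c : ℂ) (X : L), τ (c • X) = (starRingEnd ℂ) c • τ X)
    (hinv : ∀ X : L, τ (τ X) = X)
    -- ι indexes the positive roots; Xp i ∈ g_{α_i}, Xm i ∈ g_{−α_i} a Weyl basis
    {ι : Type*} [Fintype ι] [DecidableEq ι]
    (Xp Xm : ι → L)
    (hind : LinearIndependent ℂ (Sum.elim Xp Xm))
    (hτXp : ∀ i, τ (Xp i) = -(Xm i)) (hτXm : ∀ i, τ (Xm i) = -(Xp i))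
    -- Killing-form pairings of the Weyl basis
    (hκpp : ∀ i j, killingForm ℂ L (Xp i) (Xp j) = 0)
    (hκmm : ∀ i j, killingForm ℂ L (Xm i) (Xm j) = 0)
    (hκpm : ∀ i j, killingForm ℂ L (Xp i) (Xm j) = if i = j then 1 else 0)
    -- Hτ and its imaginary part Ω
    (Hτ : L → L → ℂ) (hH : ∀ X Y, Hτ X Y = -(killingForm ℂ L X (τ Y)))
    (Ω : L → L → ℝ) (hΩ : ∀ X Y, Ω X Y = (Hτ X Y).im)
    -- V⁻ (stable) and V⁺ (unstable) subspaces, and the tangent space T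
    (Vminus Vplus : Submodule ℝ L) (T : Submodule ℂ L)
    (hVm : Vminus = Submodule.span ℝ
      ((Set.range fun i => Xp i - Xm i) ∪ (Set.range fun i => Complex.I • (Xp i + Xm i))))
    (hVp : Vplus = Submodule.span ℝ
      ((Set.range fun i => Xp i + Xm i) ∪ (Set.range fun i => Complex.I • (Xp i - Xm i))))
    (hT : T = Submodule.span ℂ (Set.range Xp ∪ Set.range Xm)) :
    -- Ω vanishes on V⁻ and on V⁺ (indeed H_τ is real there)
    (∀ X ∈ Vminus, ∀ Y ∈ Vminus, Ω X Y = 0) ∧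
    (∀ X ∈ Vplus, ∀ Y ∈ Vplus, Ω X Y = 0) ∧
    (∀ X ∈ Vminus, ∀ Y ∈ Vminus, (Hτ X Y).im = 0) ∧
    (∀ X ∈ Vplus, ∀ Y ∈ Vplus, (Hτ X Y).im = 0) ∧
    -- H_τ-orthogonality of (g_α+g_{−α}) and (g_β+g_{−β}) for α ≠ β
    (∀ i j, i ≠ j → ∀ a ∈ ({Xp i, Xm i} : Set L), ∀ b ∈ ({Xp j, Xm j} : Set L),
      Hτ a b = 0) ∧
    -- half-dimensionality: dim_ℝ V^± = |Π| = half of dim_ℝ T = 2|Π|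
    (Module.finrank ℝ Vminus = 2 * Fintype.card ι) ∧
    (Module.finrank ℝ Vplus = 2 * Fintype.card ι) ∧
    (Module.finrank ℝ (Submodule.restrictScalars ℝ T) = 4 * Fintype.card ι) := by
  have hneg : ∀ X : L, τ (-X) = -τ X := by
    intro X; have := hsmul (-1) X; simpa using this
  have hsub : ∀ X Y : L, τ (X - Y) = τ X - τ Y := by
    intro X Y; rw [sub_eq_add_neg, hadd, hneg, sub_eq_add_neg]
  have hκmp : ∀ i j, killingForm ℂ L (Xm i) (Xp j) = if i = j then 1 else 0 := by
    intro i j; rw [LieModule.traceForm_comm, hκpm]; simp [eq_comm]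
  -- real bilinearity of (X, Y) ↦ Im (Hτ X Y)
  set B : L → L → ℝ := fun X Y => (Hτ X Y).im with hB
  have haddl : ∀ X X' Y, B (X + X') Y = B X Y + B X' Y := by
    intro X X' Y; simp [hB, hH, map_add, LinearMap.add_apply]; ring
  have haddr : ∀ X Y Y', B X (Y + Y') = B X Y + B X Y' := by
    intro X Y Y'; simp [hB, hH, hadd, map_add]; ring
  have hsmull : ∀ (r : ℝ) X Y, B (r • X) Y = r * B X Y := by
    intro r X Y
    rw [hB]
    simp only [hH, ← IsScalarTower.algebraMap_smul ℂ r X, map_smul,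
      LinearMap.smul_apply, Complex.coe_algebraMap, smul_eq_mul]
    simp [Complex.mul_im]
  have hsmulr : ∀ (r : ℝ) X Y, B X (r • Y) = r * B X Y := by
    intro r X Y
    rw [hB]
    simp only [hH, ← IsScalarTower.algebraMap_smul ℂ r Y, hsmul,
      Complex.coe_algebraMap, Complex.conj_ofReal, map_smul, smul_eq_mul]
    simp [Complex.mul_im]
  -- Im Hτ vanishes on V⁻
  have hHm : ∀ X ∈ Vminus, ∀ Y ∈ Vminus, (Hτ X Y).im = 0 := by
    rw [hVm]
    refine aux_im_span_zero B haddl haddr hsmull hsmulr _ ?_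
    rintro a (⟨i, rfl⟩ | ⟨i, rfl⟩) b (⟨j, rfl⟩ | ⟨j, rfl⟩) <;>
    · simp only [hB, hH, hsub, hadd, hneg, hsmul, hτXp, hτXm, map_sub, map_add,
        map_neg, map_smul, LinearMap.sub_apply, LinearMap.add_apply,
        LinearMap.neg_apply, LinearMap.smul_apply, hκpp, hκmm, hκpm, hκmp,
        Complex.conj_I, smul_eq_mul, smul_add, smul_neg]
      split_ifs <;> simp
  -- Im Hτ vanishes on V⁺
  have hHp : ∀ X ∈ Vplus, ∀ Y ∈ Vplus, (Hτ X Y).im = 0 := by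
    rw [hVp]
    refine aux_im_span_zero B haddl haddr hsmull hsmulr _ ?_
    rintro a (⟨i, rfl⟩ | ⟨i, rfl⟩) b (⟨j, rfl⟩ | ⟨j, rfl⟩) <;>
    · simp only [hB, hH, hsub, hadd, hneg, hsmul, hτXp, hτXm, map_sub, map_add,
        map_neg, map_smul, LinearMap.sub_apply, LinearMap.add_apply,
        LinearMap.neg_apply, LinearMap.smul_apply, hκpp, hκmm, hκpm, hκmp,
        Complex.conj_I, smul_eq_mul, smul_add, smul_neg, smul_sub]
      split_ifs <;> simp
  -- orthogonality for distinct roots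
  have horth : ∀ i j, i ≠ j → ∀ a ∈ ({Xp i, Xm i} : Set L),
      ∀ b ∈ ({Xp j, Xm j} : Set L), Hτ a b = 0 := by
    intro i j hij a ha b hb
    rcases ha with rfl | rfl <;> rcases hb with rfl | rfl <;>
      simp [hH, hτXp, hτXm, hκpp, hκmm, hκpm, hκmp, hij]
  -- dimensions
  have hdimm : Module.finrank ℝ Vminus = 2 * Fintype.card ι := by
    have h1 : LinearIndependent ℝ (Sum.elim (fun i => Xp i - Xm i)
        (fun i => Complex.I • (Xp i + Xm i))) := by
      have := aux_indep Xp Xm hind 1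
      simpa using this
    have h2 : Vminus = Submodule.span ℝ (Set.range (Sum.elim (fun i => Xp i - Xm i)
        (fun i => Complex.I • (Xp i + Xm i)))) := by
      rw [hVm, Set.Sum.elim_range]
    rw [h2, finrank_span_eq_card h1, Fintype.card_sum, two_mul]
  have hdimp : Module.finrank ℝ Vplus = 2 * Fintype.card ι := by
    have h1 : LinearIndependent ℝ (Sum.elim (fun i => Xp i + Xm i)
        (fun i => Complex.I • (Xp i - Xm i))) := by
      have := aux_indep Xp Xm hind (-1)
      simpa [sub_eq_add_neg] using this
    have h2 : Vplus = Submodule.span ℝ (Set.range (Sum.elim (fun i => Xp i + Xm i)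
        (fun i => Complex.I • (Xp i - Xm i)))) := by
      rw [hVp, Set.Sum.elim_range]
    rw [h2, finrank_span_eq_card h1, Fintype.card_sum, two_mul]
  have hdimT : Module.finrank ℝ (Submodule.restrictScalars ℝ T) = 4 * Fintype.card ι := by
    have hTC : Module.finrank ℂ T = 2 * Fintype.card ι := by
      have h2 : T = Submodule.span ℂ (Set.range (Sum.elim Xp Xm)) := by
        rw [hT, Set.Sum.elim_range]
      rw [h2, finrank_span_eq_card hind, Fintype.card_sum, two_mul]
    have htower := Module.finrank_mul_finrank ℝ ℂ (Submodule.restrictScalars ℝ T)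
    have hCeq : Module.finrank ℂ (Submodule.restrictScalars ℝ T)
        = Module.finrank ℂ T := rfl
    rw [hCeq, hTC, Complex.finrank_real_complex] at htower
    omega
  exact ⟨fun X hX Y hY => by rw [hΩ]; exact hHm X hX Y hY,
    fun X hX Y hY => by rw [hΩ]; exact hHp X hX Y hY,
    hHm, hHp, horth, hdimm, hdimp, hdimT⟩
end

section
/- Let g be a complex semisimple Lie algebra with compact real form u and conjugation τ, H₀, H regular in the positive Weyl chamber h_ℝ⁺, Z(x) = [x,[τx,H]], and write x = z + y with z ∈ h_ℝ⁺ and y ∈ u. Then H_τ(Z(x), y) is real, and if y ≠ 0 it is strictly negative; explicitly, for y = Σ_{α>0}(a_α S_α + b_α A_α) with a_α, b_α ∈ ℝ one has (Z(x), y) = −2 Σ_{α>0} α(H) α(z) (a_α² + b_α²). -/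
/-- Let `g` be a complex semisimple Lie algebra with compact real
form `u`, conjugation `τ`, `H₀, H` regular in the positive Weyl chamber,
`Z(x) = [x,[τx,H]]`, and write `x = z + y` with `z ∈ h_ℝ⁺` and `y ∈ u`,
`y = Σ_{α>0} (a_α S_α + b_α A_α)` where `A_α = X_α − X_{−α}`, `S_α = X_α + X_{−α}`.
Then `H_τ(Z(x), y)` is real, explicitly
`(Z(x), y) = −2 Σ_{α>0} α(H) α(z) (a_α² + b_α²)`, and it is strictly negative
if `y ≠ 0`. -/
theorem statement13 {L : Type*} [LieRing L] [LieAlgebra ℂ L] [Module.Finite ℂ L]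
    [LieAlgebra.IsSemisimple ℂ L]
    -- τ : the conjugation with respect to the compact real form u
    (τ : L → L)
    (hadd : ∀ X Y : L, τ (X + Y) = τ X + τ Y)
    (hsmul : ∀ (c : ℂ) (X : L), τ (c • X) = (starRingEnd ℂ) c • τ X)
    (hinv : ∀ X : L, τ (τ X) = X)
    (hlie : ∀ X Y : L, τ ⁅X, Y⁆ = ⁅τ X, τ Y⁆)
    -- ι indexes the positive roots; Xp i ∈ g_{α_i}, Xm i ∈ g_{−α_i} a Weyl basis
    {ι : Type*} [Fintype ι] [DecidableEq ι]
    (Xp Xm : ι → L)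
    (hind : LinearIndependent ℂ (Sum.elim Xp Xm))
    (hτXp : ∀ i, τ (Xp i) = -(Xm i)) (hτXm : ∀ i, τ (Xm i) = -(Xp i))
    (hκpp : ∀ i j, killingForm ℂ L (Xp i) (Xp j) = 0)
    (hκmm : ∀ i j, killingForm ℂ L (Xm i) (Xm j) = 0)
    (hκpm : ∀ i j, killingForm ℂ L (Xp i) (Xm j) = if i = j then 1 else 0)
    -- z ∈ h_ℝ⁺ and H ∈ h_ℝ⁺ : the root values α(z), α(H) are positive
    (z H : L) (αz αH : ι → ℝ) (hαz : ∀ i, 0 < αz i) (hαH : ∀ i, 0 < αH i)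
    (hzp : ∀ i, ⁅z, Xp i⁆ = ((αz i : ℂ)) • Xp i)
    (hzm : ∀ i, ⁅z, Xm i⁆ = -(((αz i : ℂ)) • Xm i))
    (hHp : ∀ i, ⁅H, Xp i⁆ = ((αH i : ℂ)) • Xp i)
    (hHm : ∀ i, ⁅H, Xm i⁆ = -(((αH i : ℂ)) • Xm i))
    (hzH : ⁅z, H⁆ = 0) (hτz : τ z = -z)
    -- y = Σ (a_α S_α + b_α A_α) with real coefficients, and x = z + y
    (a b : ι → ℝ) (y : L)
    (hy : y = ∑ i, (((a i : ℂ)) • (Xp i + Xm i) + ((b i : ℂ)) • (Xp i - Xm i)))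
    (x : L) (hx : x = z + y) (hτx : τ x = y - z)
    -- H_τ, its real part B, and the field Z
    (Hτ : L → L → ℂ) (hH : ∀ X Y, Hτ X Y = -(killingForm ℂ L X (τ Y)))
    (B : L → L → ℝ) (hB : ∀ X Y, B X Y = (Hτ X Y).re)
    (Z : L → L) (hZ : ∀ v, Z v = ⁅v, ⁅τ v, H⁆⁆) :
    -- H_τ(Z(x), y) is real, with the stated value, and negative when y ≠ 0
    ((Hτ (Z x) y).im = 0) ∧
    (B (Z x) y = -2 * ∑ i, αH i * αz i * ((a i) ^ 2 + (b i) ^ 2)) ∧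
    (y ≠ 0 → B (Z x) y < 0) := by
  classical
  have hτneg : ∀ X : L, τ (-X) = -τ X := by
    intro X
    have := hsmul (-1) X
    simpa using this
  have lie_sum' : ∀ (w : L) (f : ι → L), ⁅w, ∑ i, f i⁆ = ∑ i, ⁅w, f i⁆ := by
    intro w f
    rw [← LieAlgebra.ad_apply (R := ℂ), map_sum]
    simp [LieAlgebra.ad_apply]
  -- τ of the sum y
  have hτy : τ y = ∑ i, ((-(a i) : ℂ) • (Xp i + Xm i) + ((b i : ℂ)) • (Xp i - Xm i)) := by
    rw [hy]
    have hmap : ∀ (s : Finset ι) (f : ι → L), τ (∑ i ∈ s, f i) = ∑ i ∈ s, τ (f i) := by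
      intro s f
      induction s using Finset.induction_on with
      | empty =>
          have h0 : τ (0 : L) = 0 := by
            have := hsmul 0 0; simpa using this
          simpa using h0
      | insert _ _ hnot ih =>
          rw [Finset.sum_insert hnot, hadd, ih, Finset.sum_insert hnot]
    rw [hmap]
    refine Finset.sum_congr rfl fun i _ => ?_
    rw [hadd, hsmul, hsmul, hadd]
    have h1 : τ (Xp i - Xm i) = Xp i - Xm i := by
      rw [sub_eq_add_neg, hadd, hτneg, hτXp, hτXm]
      abel
    rw [h1, hτXp, hτXm, Complex.conj_ofReal, Complex.conj_ofReal]
    push_cast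
    module
  -- explicit brackets
  have hHy : ⁅H, y⁆ = ∑ i, (((αH i : ℂ) * ((a i : ℂ) + (b i : ℂ))) • Xp i
      + ((αH i : ℂ) * ((b i : ℂ) - (a i : ℂ))) • Xm i) := by
    rw [hy, lie_sum']
    refine Finset.sum_congr rfl fun i _ => ?_
    rw [lie_add, lie_smul, lie_smul, lie_add, lie_sub, hHp, hHm]
    module
  have hWz : ⁅z, τ y⁆ = ∑ i, (((αz i : ℂ) * ((b i : ℂ) - (a i : ℂ))) • Xp i
      + ((αz i : ℂ) * ((a i : ℂ) + (b i : ℂ))) • Xm i) := by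
    rw [hτy, lie_sum']
    refine Finset.sum_congr rfl fun i _ => ?_
    rw [lie_add, lie_smul, lie_smul, lie_add, lie_sub, hzp, hzm]
    module
  -- Killing form of two explicit combinations
  have hκmp : ∀ i j, killingForm ℂ L (Xm i) (Xp j) = if i = j then 1 else 0 := by
    intro i j
    rw [LieModule.traceForm_comm, hκpm]
    simp [eq_comm]
  have key : ∀ (c d p q : ι → ℂ),
      killingForm ℂ L (∑ i, (c i • Xp i + d i • Xm i)) (∑ j, (p j • Xp j + q j • Xm j))
        = ∑ i, (c i * q i + d i * p i) := by
    intro c d p q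
    have expand : ∀ i j, killingForm ℂ L (c i • Xp i + d i • Xm i) (p j • Xp j + q j • Xm j)
        = if i = j then c i * q j + d i * p j else 0 := by
      intro i j
      simp only [map_add, map_smul, LinearMap.add_apply, LinearMap.smul_apply,
        hκpp, hκmm, hκpm, hκmp, smul_eq_mul]
      by_cases h : i = j
      · subst h; simp; ring
      · simp [h]
    rw [map_sum]
    refine Finset.sum_congr rfl fun j _ => ?_
    rw [map_sum, LinearMap.sum_apply]
    simp only [expand, Finset.sum_ite_eq, Finset.sum_ite_eq', Finset.mem_univ, if_true]
  -- bracket identities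
  have hxτy : ⁅x, τ y⁆ = ⁅z, τ y⁆ := by
    have h1 : ⁅x, τ y⁆ = τ ⁅τ x, y⁆ := by rw [hlie, hinv]
    rw [h1, hτx, sub_lie, lie_self, zero_sub, hτneg, hlie, hτz, neg_lie, neg_neg]
  have hτxH : ⁅τ x, H⁆ = -⁅H, y⁆ := by
    rw [hτx, sub_lie, hzH, sub_zero, ← lie_skew]
  -- main computation
  have hmain : Hτ (Z x) y
      = (((-2 : ℝ) * ∑ i, αH i * αz i * ((a i) ^ 2 + (b i) ^ 2) : ℝ) : ℂ) := by
    rw [hH, hZ, hτxH, lie_neg, map_neg, LinearMap.neg_apply, neg_neg,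
      LieModule.traceForm_apply_lie_apply', hxτy, hHy, hWz, key]
    have hterm : ∀ i : ι,
        ((αH i : ℂ) * ((a i : ℂ) + (b i : ℂ))) * ((αz i : ℂ) * ((a i : ℂ) + (b i : ℂ)))
          + ((αH i : ℂ) * ((b i : ℂ) - (a i : ℂ))) * ((αz i : ℂ) * ((b i : ℂ) - (a i : ℂ)))
        = 2 * ((αH i : ℂ) * (αz i : ℂ) * ((a i : ℂ) ^ 2 + (b i : ℂ) ^ 2)) := by
      intro i; ring
    simp only [hterm]
    push_cast
    rw [Finset.mul_sum, ← Finset.sum_neg_distrib]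
    exact Finset.sum_congr rfl fun i _ => by ring
  have hsum : B (Z x) y = -2 * ∑ i, αH i * αz i * ((a i) ^ 2 + (b i) ^ 2) := by
    rw [hB, hmain, Complex.ofReal_re]
  refine ⟨by rw [hmain, Complex.ofReal_im], hsum, fun hy0 => ?_⟩
  rw [hsum]
  have hex : ∃ i, a i ≠ 0 ∨ b i ≠ 0 := by
    by_contra hcon
    push_neg at hcon
    apply hy0
    rw [hy]
    refine Finset.sum_eq_zero fun i _ => ?_
    rw [(hcon i).1, (hcon i).2]
    simp
  obtain ⟨i, hi⟩ := hex
  have hpos : 0 < ∑ i, αH i * αz i * ((a i) ^ 2 + (b i) ^ 2) := by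
    refine Finset.sum_pos' (fun j _ => mul_nonneg (mul_nonneg (hαH j).le (hαz j).le) (by positivity)) ⟨i, Finset.mem_univ i, ?_⟩
    have h1 : 0 < (a i) ^ 2 + (b i) ^ 2 := by
      rcases hi with h | h
      · have : 0 < (a i) ^ 2 := by positivity
        nlinarith [sq_nonneg (b i)]
      · have : 0 < (b i) ^ 2 := by positivity
        nlinarith [sq_nonneg (a i)]
    have := mul_pos (mul_pos (hαH i) (hαz i)) h1
    linarith
  linarith
end

section
/- Let f_H(x) = ⟨x, H⟩ on the adjoint orbit O(H₀) of sl(n+1,ℂ), and let w be a Weyl group element with critical point wH₀. In the basis {(X̃_α − e^{−iα(H₁)} X̃_{−α})(wH₀), (iX̃_α + e^{−iα(H₁)} iX̃_{−α})(wH₀) : α(wH₀) < 0} of the tangent space to the graph Γ(e^{iH₁} ∘ R_{w₀}) at wH₀, the Hessian of f_H is diagonal, with both diagonal entries corresponding to the root α equal to −2 α(wH₀) α(H) e^{−iα(H₁)}; moreover the cross terms Hess f_H(X̃_α − e^{−iα(H₁)}X̃_{−α}, iX̃_α + e^{−iα(H₁)}iX̃_{−α}) vanish. -/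
/-- Let `f_H(x) = ⟨x, H⟩` on the adjoint orbit `O(H₀)` and `w` a
Weyl group element with critical point `wH₀`.  In the basis
`{(X̃_α − e^{−iα(H₁)} X̃_{−α})(wH₀), (iX̃_α + e^{−iα(H₁)} iX̃_{−α})(wH₀) : α(wH₀) < 0}`
of the tangent space to `Γ(e^{iH₁} ∘ R_{w₀})` at `wH₀`, the Hessian of `f_H` —
given at the critical point `x = wH₀` by `Hess(Ã(x),B̃(x)) = −⟨[x,B],[H,A]⟩` — is
diagonal, with both diagonal entries for the root `α` equal to
`−2 α(wH₀) α(H) e^{−iα(H₁)}`, and vanishing cross terms. -/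
theorem statement16 {L : Type*} [LieRing L] [LieAlgebra ℂ L] [Module.Finite ℂ L]
    [LieAlgebra.IsSemisimple ℂ L]
    -- x = wH₀ and H in the Cartan subalgebra; α a root with a = α(wH₀) < 0,
    -- αH = α(H); Xα, Xmα a Weyl basis of g_α ⊕ g_{−α}
    (x H Xα Xmα : L) (a αH : ℝ) (ha : a < 0)
    (hxα : ⁅x, Xα⁆ = ((a : ℂ)) • Xα) (hxmα : ⁅x, Xmα⁆ = -(((a : ℂ)) • Xmα))
    (hHα : ⁅H, Xα⁆ = ((αH : ℂ)) • Xα) (hHmα : ⁅H, Xmα⁆ = -(((αH : ℂ)) • Xmα))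
    (hκpm : killingForm ℂ L Xα Xmα = 1)
    (hκpp : killingForm ℂ L Xα Xα = 0) (hκmm : killingForm ℂ L Xmα Xmα = 0)
    -- t = α(H₁) ∈ ℝ and eps = e^{−iα(H₁)}
    (t : ℝ) (eps : ℂ) (heps : eps = Complex.exp (-(Complex.I * t)))
    -- the Hessian of f_H at the critical point x = wH₀
    (Hess : L → L → ℂ)
    (hHess : ∀ A B : L, Hess A B = -(killingForm ℂ L ⁅x, B⁆ ⁅H, A⁆)) :
    -- the two diagonal entries corresponding to the root α
    (Hess (Xα - eps • Xmα) (Xα - eps • Xmα) = ((-2 * a * αH : ℝ) : ℂ) * eps) ∧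
    (Hess (Complex.I • Xα + eps • (Complex.I • Xmα))
          (Complex.I • Xα + eps • (Complex.I • Xmα)) = ((-2 * a * αH : ℝ) : ℂ) * eps) ∧
    -- the cross terms vanish
    (Hess (Xα - eps • Xmα) (Complex.I • Xα + eps • (Complex.I • Xmα)) = 0) ∧
    (Hess (Complex.I • Xα + eps • (Complex.I • Xmα)) (Xα - eps • Xmα) = 0) := by
  have hsym : killingForm ℂ L Xmα Xα = 1 := by
    rw [LieModule.traceForm_comm]; exact hκpm
  refine ⟨?_, ?_, ?_, ?_⟩ <;>
  · simp only [hHess, lie_add, lie_sub, lie_smul, hxα, hxmα, hHα, hHmα, map_add, map_sub,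
      map_smul, map_neg, LinearMap.add_apply, LinearMap.sub_apply, LinearMap.smul_apply,
      LinearMap.neg_apply, smul_neg, hκpm, hκpp, hκmm, hsym, smul_eq_mul]
    push_cast
    first
    | ring1
    | (ring_nf
       rw [show (Complex.I:ℂ)^2 = -1 from Complex.I_sq]
       ring)
end

section
/- In ℂ^{n+1} with n even, let m ∈ SU(n+1) be a diagonal matrix with entries ±1 satisfying m² = 1, and let u ∈ ℂ^{n+1} be a unit vector with (u, mu) ≠ 0. Let Φ be the linear map with Φv = n v for v ∈ ℂu and Φw = −w for w ∈ m([u]^⊥). Then for every standard basis vector e_j, the diagonal entry (Φ e_j, e_j) is real. -/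
/-- In `ℂ^{n+1}` with `n` even, let `m ∈ SU(n+1)` be a diagonal
matrix with entries `±1` satisfying `m² = 1`, and let `u ∈ ℂ^{n+1}` be a unit vector
with `(u, mu) ≠ 0`.  Let `Φ` be the linear map with `Φv = n·v` for `v ∈ ℂu` and
`Φw = −w` for `w ∈ m([u]^⊥)`.  Then for every standard basis vector `e_j`, the
diagonal entry `(Φ e_j, e_j)` is real. -/
theorem statement17 (n : ℕ) (hn : Even n)
    -- m : diagonal with entries ε j = ±1, of determinant 1 (so m ∈ SU(n+1), m² = 1)
    (ε : Fin (n + 1) → ℝ) (hε : ∀ j, ε j = 1 ∨ ε j = -1) (hdet : ∏ j, ε j = 1)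
    (m : EuclideanSpace ℂ (Fin (n + 1)) →ₗ[ℂ] EuclideanSpace ℂ (Fin (n + 1)))
    (hm : ∀ (v : EuclideanSpace ℂ (Fin (n + 1))) (j : Fin (n + 1)),
      m v j = (ε j : ℂ) * v j)
    -- u : a unit vector with (u, mu) ≠ 0
    (u : EuclideanSpace ℂ (Fin (n + 1))) (hu : ‖u‖ = 1)
    (hum : (inner ℂ (m u) u : ℂ) ≠ 0)
    -- Φ : the linear map with Φv = n·v on ℂu and Φw = −w on m([u]^⊥)
    (Φ : EuclideanSpace ℂ (Fin (n + 1)) →ₗ[ℂ] EuclideanSpace ℂ (Fin (n + 1)))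
    (hΦu : Φ u = (n : ℂ) • u)
    (hΦw : ∀ w : EuclideanSpace ℂ (Fin (n + 1)),
      (inner ℂ u w : ℂ) = 0 → Φ (m w) = -(m w)) :
    ∀ j : Fin (n + 1),
      ((inner ℂ (EuclideanSpace.single j (1 : ℂ)) (Φ (EuclideanSpace.single j 1)) : ℂ)).im
        = 0 := by
  intro j
  set e : EuclideanSpace ℂ (Fin (n + 1)) := EuclideanSpace.single j 1 with he
  set α : ℂ := inner ℂ u (m u) with hα
  have hsq : ∀ k, (ε k : ℂ) * (ε k : ℂ) = 1 := by
    intro k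
    rcases hε k with h | h <;> simp [h]
  have hmm : ∀ x : EuclideanSpace ℂ (Fin (n + 1)), m (m x) = x := by
    intro x
    ext k
    rw [hm, hm, ← mul_assoc, hsq, one_mul]
  have hα0 : α ≠ 0 := fun h => hum (by
    rw [show (inner ℂ (m u) u : ℂ) = (starRingEnd ℂ) α by rw [hα, inner_conj_symm], h,
      map_zero])
  have hαre : α.im = 0 := by
    have h1 : α = ∑ k, (starRingEnd ℂ) (u k) * ((ε k : ℂ) * u k) := by
      rw [hα, PiLp.inner_apply]
      refine Finset.sum_congr rfl fun k _ => ?_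
      rw [hm]; exact (RCLike.inner_apply _ _).trans (by ring)
    rw [h1, Complex.im_sum]
    refine Finset.sum_eq_zero fun k _ => ?_
    rw [show (starRingEnd ℂ) (u k) * ((ε k : ℂ) * u k)
        = (ε k : ℂ) * (u k * (starRingEnd ℂ) (u k)) by ring, Complex.mul_conj]
    simp [← Complex.ofReal_mul]
  set c : ℂ := inner ℂ u (m e) / α with hc
  have hv : (inner ℂ u (m (e - c • u)) : ℂ) = 0 := by
    rw [map_sub, map_smul, inner_sub_right, inner_smul_right, ← hα, hc,
      div_mul_cancel₀ _ hα0, sub_self]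
  have hw := hΦw (m (e - c • u)) hv
  rw [hmm] at hw
  have hΦe : Φ e = (((n : ℂ) + 1) * c) • u - e := by
    have h2 : Φ e = Φ (c • u) + Φ (e - c • u) := by
      rw [← map_add]; congr 1; abel
    rw [h2, hw, map_smul, hΦu]
    module
  have hue : (inner ℂ u (m e) : ℂ) = (starRingEnd ℂ) (u j) * (ε j : ℂ) := by
    simp [PiLp.inner_apply, hm, he, EuclideanSpace.single_apply, mul_ite,
      Finset.sum_ite_eq']
    exact mul_comm _ _
  have heu : (inner ℂ e u : ℂ) = u j := by
    rw [he, EuclideanSpace.inner_single_left]; simp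
  have hee : (inner ℂ e e : ℂ) = 1 := by
    rw [he, EuclideanSpace.inner_single_left]
    simp [EuclideanSpace.single_apply]
  have hαr : (α.re : ℂ) = α := Complex.ext (by simp) (by simp [hαre])
  have key : (inner ℂ e (Φ e) : ℂ)
      = ((((n : ℝ) + 1) * ε j * Complex.normSq (u j) : ℝ) : ℂ) / α - 1 := by
    rw [hΦe, inner_sub_right, inner_smul_right, heu, hee, hc, hue]
    push_cast
    field_simp
    linear_combination ((n : ℂ) + 1) * (ε j : ℂ) * (Complex.mul_conj (u j))
  rw [key, ← hαr, ← Complex.ofReal_div]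
  simp
end
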